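/- arXiv:2310.17611 — 2 statements merged into one kernel-verified Lean document; each statement's English description precedes it below -/
import Mathlib

section
/- Let V be a finite collection of linearly independent vectors in ℝ^d. Then the partial orthogonality independence model on V satisfies the intersection axiom: if A ⫫ B | (C ∪ D) and A ⫫ C | (B ∪ D), then A ⫫ (B ∪ C) | D, for disjoint subsets A, B, C, D of V. -/
noncomputable def resid {E : Type*} [NormedAddCommGroup E] [InnerProductSpace ℝ E]
    [FiniteDimensional ℝ E] (C : Set E) (v : E) : E :=
  v - ((Submodule.span ℝ C).orthogonalProjectionOnto v : E)

/-- Partial orthogonality: `A ⫫ B | C` iff for all `a ∈ A`, `b ∈ B`, the residuals of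
`a` and `b` after orthogonal projection onto the span of `C` are orthogonal. -/
def pOrth {d : ℕ} (A B C : Finset (EuclideanSpace ℝ (Fin d))) : Prop :=
  ∀ a ∈ A, ∀ b ∈ B,
    inner ℝ (resid (C : Set (EuclideanSpace ℝ (Fin d))) a)
      (resid (C : Set (EuclideanSpace ℝ (Fin d))) b) = (0 : ℝ)

/-! The residual of `a` on `C ∪ D` is orthogonal to `B` by the first hypothesis, so it is already
the residual of `a` on `B ∪ C ∪ D`; by the second hypothesis, so is the residual on `B ∪ D`.
Hence `a` minus this common residual lies in `span (B ∪ D) ⊓ span (C ∪ D)`, which linear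
independence and `B ∩ C = ∅` cut down to `span D`. The common residual is therefore the residual
of `a` on `D`, and it is orthogonal to all of `B ∪ C`. -/

open Submodule

theorem LinearIndependent.span_image_inf_span_image {ι R M : Type*} [Semiring R] [AddCommMonoid M]
    [Module R M] {v : ι → M} (hv : LinearIndependent R v) (s t : Set ι) :
    span R (v '' s) ⊓ span R (v '' t) = span R (v '' (s ∩ t)) := by
  simp only [Finsupp.span_image_eq_map_linearCombination, Finsupp.supported_inter]
  exact (map_inf _ hv).symm

theorem LinearIndepOn.span_inf_span {R M : Type*} [Semiring R] [AddCommMonoid M] [Module R M]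
    {V s t : Set M} (hV : LinearIndepOn R id V) (hs : s ⊆ V) (ht : t ⊆ V) :
    span R s ⊓ span R t = span R (s ∩ t) := by
  have himage : ∀ u ⊆ V, ((↑) : V → M) '' ((↑) ⁻¹' u) = u := fun u hu => by
    rw [Subtype.image_preimage_coe, Set.inter_eq_right.mpr hu]
  have := LinearIndependent.span_image_inf_span_image (v := ((↑) : V → M)) hV
    ((↑) ⁻¹' s) ((↑) ⁻¹' t)
  rwa [← Set.preimage_inter, himage s hs, himage t ht,
    himage _ (Set.inter_subset_left.trans hs)] at this

theorem Submodule.mem_orthogonal_span_iff {𝕜 E : Type*} [RCLike 𝕜] [NormedAddCommGroup E]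
    [InnerProductSpace 𝕜 E] {S : Set E} {r : E} :
    r ∈ (span 𝕜 S)ᗮ ↔ ∀ s ∈ S, inner 𝕜 r s = (0 : 𝕜) := by
  rw [← span_singleton_le_iff_mem, ← isOrtho_iff_le, isOrtho_span]
  simp

section Residual

variable {E : Type*} [NormedAddCommGroup E] [InnerProductSpace ℝ E] [FiniteDimensional ℝ E]

theorem resid_mem_orthogonal (S : Set E) (v : E) : resid S v ∈ (span ℝ S)ᗮ :=
  (span ℝ S).sub_starProjection_mem_orthogonal v

theorem sub_resid_mem_span (S : Set E) (v : E) : v - resid S v ∈ span ℝ S := by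
  simp [resid]

theorem resid_eq_of_sub_mem_span {S : Set E} {v r : E} (hv : v - r ∈ span ℝ S)
    (hr : r ∈ (span ℝ S)ᗮ) : resid S v = r := by
  have := eq_starProjection_of_mem_orthogonal hv (by rwa [sub_sub_cancel])
  rw [resid, ← starProjection_apply, this, sub_sub_cancel]

theorem resid_eq_resid_of_subset {S T : Set E} (hST : S ⊆ T) {v : E}
    (h : resid S v ∈ (span ℝ T)ᗮ) : resid T v = resid S v :=
  resid_eq_of_sub_mem_span (span_mono hST (sub_resid_mem_span S v)) h

theorem inner_resid_resid (S : Set E) (a b : E) :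
    inner ℝ (resid S a) (resid S b) = inner ℝ (resid S a) b := by
  have := inner_right_of_mem_orthogonal (sub_resid_mem_span S b) (resid_mem_orthogonal S a)
  rw [inner_sub_left, sub_eq_zero] at this
  rw [real_inner_comm, ← this, real_inner_comm]

theorem forall_inner_resid_resid_eq_zero_iff (S B : Set E) (a : E) :
    (∀ b ∈ B, inner ℝ (resid S a) (resid S b) = (0 : ℝ)) ↔
      resid S a ∈ (span ℝ (B ∪ S))ᗮ := by
  rw [span_union, ← inf_orthogonal, mem_inf, and_iff_left (resid_mem_orthogonal S a),
    mem_orthogonal_span_iff]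
  simp only [inner_resid_resid]

end Residual

theorem pOrth_iff_resid_mem_orthogonal {d : ℕ} (A B C : Finset (EuclideanSpace ℝ (Fin d))) :
    pOrth A B C ↔ ∀ a ∈ A, resid (C : Set (EuclideanSpace ℝ (Fin d))) a ∈
      (span ℝ (B ∪ C : Set (EuclideanSpace ℝ (Fin d))))ᗮ := by
  simp only [pOrth, ← forall_inner_resid_resid_eq_zero_iff, Finset.mem_coe]

theorem partial_orthogonality_intersection_general {d : ℕ}
    [DecidableEq (EuclideanSpace ℝ (Fin d))]
    (V A B C D : Finset (EuclideanSpace ℝ (Fin d)))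
    (hV : LinearIndependent ℝ (fun x : {x // x ∈ V} => (x : EuclideanSpace ℝ (Fin d))))
    (hB : B ⊆ V) (hC : C ⊆ V) (hD : D ⊆ V)
    (hBC : Disjoint B C)
    (h1 : pOrth A B (C ∪ D)) (h2 : pOrth A C (B ∪ D)) : pOrth A (B ∪ C) D := by
  rw [pOrth_iff_resid_mem_orthogonal] at h1 h2 ⊢
  intro a ha
  have hCD_orth : resid (↑C ∪ ↑D) a ∈ (span ℝ (↑B ∪ ↑C ∪ ↑D))ᗮ := by
    simpa [Set.union_assoc] using h1 a ha
  have hBD_orth : resid (↑B ∪ ↑D) a ∈ (span ℝ (↑B ∪ ↑C ∪ ↑D))ᗮ := by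
    simpa [Set.union_assoc, Set.union_left_comm] using h2 a ha
  have hresid_eq : resid (↑B ∪ ↑D) a = resid (↑C ∪ ↑D) a :=
    (resid_eq_resid_of_subset (by tauto_set) hBD_orth).symm.trans
      (resid_eq_resid_of_subset (by tauto_set) hCD_orth)
  have hspan : span ℝ (↑B ∪ ↑D) ⊓ span ℝ (↑C ∪ ↑D) ≤
      span ℝ (D : Set (EuclideanSpace ℝ (Fin d))) := by
    rw [LinearIndepOn.span_inf_span hV (by simp [hB, hD]) (by simp [hC, hD]),
      ← Set.inter_union_distrib_right, (Finset.disjoint_coe.2 hBC).inter_eq, Set.empty_union]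
  have hresid_D : resid ↑D a = resid (↑C ∪ ↑D) a :=
    resid_eq_of_sub_mem_span
      (hspan ⟨hresid_eq ▸ sub_resid_mem_span _ _, sub_resid_mem_span _ _⟩)
      (orthogonal_le (span_mono (by tauto_set)) hCD_orth)
  simpa [hresid_D] using hCD_orth

/-- For a linearly independent collection of vectors, partial orthogonality satisfies
the intersection axiom. -/
theorem partial_orthogonality_intersection {d : ℕ}
    [DecidableEq (EuclideanSpace ℝ (Fin d))]
    (V A B C D : Finset (EuclideanSpace ℝ (Fin d)))
    (hV : LinearIndependent ℝ (fun x : {x // x ∈ V} => (x : EuclideanSpace ℝ (Fin d))))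
    (hA : A ⊆ V) (hB : B ⊆ V) (hC : C ⊆ V) (hD : D ⊆ V)
    (hAB : Disjoint A B) (hAC : Disjoint A C) (hAD : Disjoint A D)
    (hBC : Disjoint B C) (hBD : Disjoint B D) (hCD : Disjoint C D)
    (h1 : pOrth A B (C ∪ D)) (h2 : pOrth A C (B ∪ D)) : pOrth A (B ∪ C) D :=
  partial_orthogonality_intersection_general V A B C D hV hB hC hD hBC h1 h2
end

section
/- Let V be a finite set of random variables with distribution P, let G_P be a minimal I-map (undirected graph) of P, and let ε be a perfect perturbation factor for G_P, so that A := (I + ε·Adj(G_P))^{-1} exists. Write the symmetric matrix A = U Σ Uᵀ (eigendecomposition) and define f(v_i) = U_i Σ^{1/2}. Then f is an independence preserving embedding map for P: every partial-orthogonality independence statement among the embeddings f(V) is a conditional independence statement of P. If moreover P is faithful to G_P, then the partial-orthogonality independencies of f(V) coincide exactly with the conditional independencies of P. -/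
open Matrix ProbabilityTheory MeasureTheory

/-- Conditional independence of `X i` and `X j` given the family `(X k)_{k ∈ S}`. -/
def CIgiven {Ω : Type*} [mΩ : MeasurableSpace Ω] [StandardBorelSpace Ω] {n : ℕ}
    (μ : Measure Ω) [IsFiniteMeasure μ] (X : Fin n → Ω → ℝ) (hX : ∀ k, Measurable (X k))
    (i j : Fin n) (S : Finset (Fin n)) : Prop :=
  CondIndepFun (⨆ k ∈ S, MeasurableSpace.comap (X k) inferInstance)
    (iSup₂_le fun k _ => (measurable_iff_comap_le.mp (hX k))) (X i) (X j) μ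

/-- `C` separates `a` and `b` in the graph `G`. -/
def gsep {V : Type*} (G : SimpleGraph V) (a b : V) (C : Finset V) : Prop :=
  ∀ p : G.Walk a b, ∃ c ∈ C, c ∈ p.support

/-! The Gram matrix of the embedding `f` is `A = (I + ε·Adj G)⁻¹`. The inner product of the
residuals of `f i` and `f j` modulo `span f(S)` is the `(i, j)` entry of the Schur complement of
the block `A_SS`, and since `A * (I + ε·Adj G) = 1`, that Schur complement is the inverse of the
block of `I + ε·Adj G` on the complement of `S`. Perfectness of `ε` says this entry vanishes exactly
when `S` separates `i` and `j` in `G`, and the I-map property (resp. faithfulness) turns separation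
into (resp. makes it equivalent to) conditional independence. -/

namespace Matrix

variable {ι R : Type*} [Fintype ι] [DecidableEq ι] [CommRing R]

theorem inv_toBlock_eq_sub_of_mul_eq_one {A B : Matrix ι ι R} (hAB : A * B = 1)
    (p : ι → Prop) [DecidablePred p] (hA : IsUnit (A.toBlock (¬p ·) (¬p ·)).det) :
    (B.toBlock p p)⁻¹ = A.toBlock p p -
      A.toBlock p (¬p ·) * (A.toBlock (¬p ·) (¬p ·))⁻¹ * A.toBlock (¬p ·) p := by
  have hpp : A.toBlock p p * B.toBlock p p + A.toBlock p (¬p ·) * B.toBlock (¬p ·) p = 1 := by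
    rw [← toBlock_mul_eq_add, hAB, toBlock_one_self]
  have hqp : A.toBlock (¬p ·) p * B.toBlock p p + A.toBlock (¬p ·) (¬p ·) * B.toBlock (¬p ·) p
      = 0 := by
    rw [← toBlock_mul_eq_add, hAB, toBlock_one_disjoint]
    exact disjoint_iff_inf_le.mpr fun i h => h.1 h.2
  have hB : B.toBlock (¬p ·) p =
      -((A.toBlock (¬p ·) (¬p ·))⁻¹ * A.toBlock (¬p ·) p * B.toBlock p p) := by
    calc B.toBlock (¬p ·) p
        = (A.toBlock (¬p ·) (¬p ·))⁻¹ * (A.toBlock (¬p ·) (¬p ·) * B.toBlock (¬p ·) p) := by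
          rw [← Matrix.mul_assoc, nonsing_inv_mul _ hA, Matrix.one_mul]
      _ = _ := by rw [eq_neg_of_add_eq_zero_right hqp, Matrix.mul_neg, Matrix.mul_assoc]
  refine inv_eq_left_inv ?_
  rw [← hpp, hB, sub_mul]
  simp only [Matrix.mul_neg, Matrix.mul_assoc, sub_eq_add_neg]

end Matrix

section Residual

open Submodule

variable {E : Type*} [NormedAddCommGroup E] [InnerProductSpace ℝ E] [FiniteDimensional ℝ E]

theorem resid_eq_sub_of_mem_span {C : Set E} {x u : E} (hu : u ∈ span ℝ C)
    (hxu : ∀ c ∈ C, inner ℝ c (x - u) = 0) : resid C x = x - u := by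
  have hperp : x - u ∈ (span ℝ C)ᗮ :=
    (isOrtho_span.mpr fun _ hw _ hc => by
      rw [Set.mem_singleton_iff.mp hw, real_inner_comm]; exact hxu _ hc)
      (mem_span_singleton_self _)
  rw [resid, ← starProjection_apply, eq_starProjection_of_mem_orthogonal hu hperp]

theorem inner_resid_resid_s13 (C : Set E) (x y : E) :
    inner ℝ (resid C x) (resid C y) = inner ℝ x (resid C y) := by
  have hy : resid C y ∈ (span ℝ C)ᗮ := by
    rw [resid, ← starProjection_apply]; exact sub_starProjection_mem_orthogonal y
  rw [show resid C x = x - ((span ℝ C).orthogonalProjectionOnto x : E) from rfl, inner_sub_left,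
    inner_right_of_mem_orthogonal (coe_mem _) hy, sub_zero]

theorem inner_resid_image_eq_gram_sub {ι : Type*} [Fintype ι] [DecidableEq ι] (v : ι → E)
    (q : ι → Prop) [DecidablePred q] (hq : IsUnit ((gram ℝ v).toBlock q q).det) (i j : ι) :
    inner ℝ (resid (v '' {k | q k}) (v i)) (resid (v '' {k | q k}) (v j)) =
      gram ℝ v i j - (fun s : {k // q k} => gram ℝ v i s) ⬝ᵥ
        (((gram ℝ v).toBlock q q)⁻¹ *ᵥ fun t => gram ℝ v t j) := by
  set c := ((gram ℝ v).toBlock q q)⁻¹ *ᵥ fun t => gram ℝ v t j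
  set u := ∑ s, c s • v s
  have hc : (gram ℝ v).toBlock q q *ᵥ c = fun t : {k // q k} => gram ℝ v t j := by
    rw [mulVec_mulVec, mul_nonsing_inv _ hq, one_mulVec]
  have hu : u ∈ span ℝ (v '' {k | q k}) :=
    sum_smul_mem _ _ fun s _ => subset_span ⟨s, s.2, rfl⟩
  have horth : ∀ w ∈ v '' {k | q k}, inner ℝ w (v j - u) = 0 := by
    rintro _ ⟨s, hs, rfl⟩
    have hcs := congrFun hc ⟨s, hs⟩
    simp only [mulVec, dotProduct, toBlock_apply, gram_apply] at hcs
    simp only [u, inner_sub_right, inner_sum, real_inner_smul_right, ← hcs, mul_comm, sub_self]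
  rw [inner_resid_resid_s13, resid_eq_sub_of_mem_span hu horth, inner_sub_right, inner_sum]
  simp [real_inner_smul_right, dotProduct, gram_apply, mul_comm]

theorem inner_resid_eq_inv_toBlock {ι : Type*} [Fintype ι] [DecidableEq ι] (v : ι → E)
    {B : Matrix ι ι ℝ} (hB : gram ℝ v * B = 1) (hv : (gram ℝ v).PosDef) (p : ι → Prop)
    [DecidablePred p] {i j : ι} (hi : p i) (hj : p j) :
    inner ℝ (resid (v '' {k | ¬p k}) (v i)) (resid (v '' {k | ¬p k}) (v j)) =
      (B.toBlock p p)⁻¹ ⟨i, hi⟩ ⟨j, hj⟩ := by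
  have hq : IsUnit ((gram ℝ v).toBlock (¬p ·) (¬p ·)).det :=
    (hv.submatrix Subtype.val_injective).det_pos.ne'.isUnit
  rw [inner_resid_image_eq_gram_sub v _ hq, inv_toBlock_eq_sub_of_mul_eq_one hB p hq]
  simp only [Matrix.sub_apply, mul_apply, toBlock_apply, dotProduct, mulVec, gram_apply,
    Finset.mul_sum, Finset.sum_mul, mul_assoc]
  exact congrArg _ Finset.sum_comm

end Residual

theorem gram_eq_mul_diagonal_mul_transpose {n m : Type*} [Fintype m] [DecidableEq m]
    (U : Matrix n m ℝ) {d : m → ℝ} (hd : ∀ k, 0 ≤ d k) {f : n → EuclideanSpace ℝ m}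
    (hf : ∀ i k, f i k = U i k * √(d k)) : gram ℝ f = U * diagonal d * Uᵀ := by
  ext i j
  rw [mul_apply]
  simp only [gram_apply, PiLp.inner_apply, RCLike.inner_apply, conj_trivial, hf, mul_diagonal,
    transpose_apply]
  refine Finset.sum_congr rfl fun k _ => ?_
  linear_combination U i k * U j k * Real.mul_self_sqrt (hd k)

theorem ipe_construction_general {Ω : Type*} [mΩ : MeasurableSpace Ω] [StandardBorelSpace Ω]
    {n : ℕ} (μ : Measure Ω) [IsProbabilityMeasure μ]
    (X : Fin n → Ω → ℝ) (hX : ∀ k, Measurable (X k))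
    (G : SimpleGraph (Fin n)) [DecidableRel G.Adj]
    -- `G` is an I-map of the distribution of `X`
    (hImap : ∀ (i j : Fin n) (S : Finset (Fin n)), i ≠ j → i ∉ S → j ∉ S →
      gsep G i j S → CIgiven μ X hX i j S)
    (ε : ℝ)
    -- `ε` is a perfect perturbation factor for `G`
    (hdet : IsUnit ((1 : Matrix (Fin n) (Fin n) ℝ) + ε • G.adjMatrix ℝ).det)
    (hperfect : ∀ (I : Finset (Fin n)) (i j : Fin n) (hi : i ∈ I) (hj : j ∈ I), i ≠ j →
      ((((1 : Matrix (Fin n) (Fin n) ℝ) + ε • G.adjMatrix ℝ).submatrix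
          (fun a : {x // x ∈ I} => (a : Fin n)) (fun a : {x // x ∈ I} => (a : Fin n)))⁻¹
          ⟨i, hi⟩ ⟨j, hj⟩ = 0
        ↔ gsep G i j (Finset.univ \ I)))
    -- eigendecomposition `A = U D Uᵀ` of `A = (I + ε·Adj(G))⁻¹`
    (U D : Matrix (Fin n) (Fin n) ℝ)
    (hD : D.IsDiag) (hDpos : ∀ k, 0 ≤ D k k)
    (hdec : ((1 : Matrix (Fin n) (Fin n) ℝ) + ε • G.adjMatrix ℝ)⁻¹ = U * D * Uᵀ)
    -- the embedding map
    (f : Fin n → EuclideanSpace ℝ (Fin n))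
    (hf : ∀ i k, f i k = U i k * Real.sqrt (D k k)) :
    -- `f` is an IPE map: partial orthogonality implies conditional independence
    (∀ (i j : Fin n) (S : Finset (Fin n)), i ≠ j → i ∉ S → j ∉ S →
      (inner ℝ (resid (f '' (S : Set (Fin n))) (f i)) (resid (f '' (S : Set (Fin n))) (f j)) : ℝ) = 0 →
      CIgiven μ X hX i j S)
    -- and if `P` is faithful to `G`, then `f` is a faithful IPE map
    ∧ ((∀ (i j : Fin n) (S : Finset (Fin n)), i ≠ j → i ∉ S → j ∉ S →
        (gsep G i j S ↔ CIgiven μ X hX i j S)) →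
      ∀ (i j : Fin n) (S : Finset (Fin n)), i ≠ j → i ∉ S → j ∉ S →
        ((inner ℝ (resid (f '' (S : Set (Fin n))) (f i))
          (resid (f '' (S : Set (Fin n))) (f j)) : ℝ) = 0 ↔ CIgiven μ X hX i j S)) := by
  set B := (1 : Matrix (Fin n) (Fin n) ℝ) + ε • G.adjMatrix ℝ
  have hgram : B⁻¹ = gram ℝ f := by
    rw [hdec, gram_eq_mul_diagonal_mul_transpose U (d := D.diag) hDpos hf, hD.diagonal_diag]
  have hpos : (gram ℝ f).PosDef := (posSemidef_gram ℝ f).posDef_iff_isUnit.mpr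
    (hgram ▸ isUnit_nonsing_inv_iff.mpr (B.isUnit_iff_isUnit_det.mpr hdet))
  have hmul : gram ℝ f * B = 1 := hgram ▸ nonsing_inv_mul B hdet
  have hsep : ∀ (i j : Fin n) (S : Finset (Fin n)), i ≠ j → i ∉ S → j ∉ S →
      (inner ℝ (resid (f '' (S : Set (Fin n))) (f i)) (resid (f '' (S : Set (Fin n))) (f j)) = 0
        ↔ gsep G i j S) := by
    intro i j S hij hi hj
    have hi' : i ∈ Finset.univ \ S := by simpa using hi
    have hj' : j ∈ Finset.univ \ S := by simpa using hj
    have hS : (S : Set (Fin n)) = {k | ¬k ∈ Finset.univ \ S} := by ext; simp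
    rw [hS, inner_resid_eq_inv_toBlock f hmul hpos _ hi' hj']
    have h := hperfect (Finset.univ \ S) i j hi' hj' hij
    rw [Finset.sdiff_sdiff_self_left, Finset.univ_inter] at h
    -- the two inverses differ only in the `Fintype` instance on the subtype
    convert h using 4
    rfl
  exact ⟨fun i j S hij hi hj h => hImap i j S hij hi hj ((hsep i j S hij hi hj).mp h),
    fun hfaith i j S hij hi hj => (hsep i j S hij hi hj).trans (hfaith i j S hij hi hj)⟩

/-- Construction of an independence preserving embedding map from a minimal I-map `G` of the
distribution of `X` and a perfect perturbation factor `ε`: with `A = (I + ε·Adj(G))⁻¹ = U D Uᵀ`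
and `f i` the `i`-th row of `U D^{1/2}`, every partial-orthogonality statement among the
embeddings is a conditional independence of the distribution; and under faithfulness the two
independence models coincide. -/
theorem ipe_construction {Ω : Type*} [mΩ : MeasurableSpace Ω] [StandardBorelSpace Ω] [Nonempty Ω]
    {n : ℕ} (μ : Measure Ω) [IsProbabilityMeasure μ]
    (X : Fin n → Ω → ℝ) (hX : ∀ k, Measurable (X k))
    (G : SimpleGraph (Fin n)) [DecidableRel G.Adj]
    -- `G` is an I-map of the distribution of `X`
    (hImap : ∀ (i j : Fin n) (S : Finset (Fin n)), i ≠ j → i ∉ S → j ∉ S →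
      gsep G i j S → CIgiven μ X hX i j S)
    -- and it is a minimal I-map: no proper subgraph is an I-map
    (hMinimal : ∀ G' : SimpleGraph (Fin n), G' < G →
      ¬ (∀ (i j : Fin n) (S : Finset (Fin n)), i ≠ j → i ∉ S → j ∉ S →
        gsep G' i j S → CIgiven μ X hX i j S))
    (ε : ℝ)
    -- `ε` is a perfect perturbation factor for `G`
    (hdet : IsUnit ((1 : Matrix (Fin n) (Fin n) ℝ) + ε • G.adjMatrix ℝ).det)
    (hperfect : ∀ (I : Finset (Fin n)) (i j : Fin n) (hi : i ∈ I) (hj : j ∈ I), i ≠ j →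
      ((((1 : Matrix (Fin n) (Fin n) ℝ) + ε • G.adjMatrix ℝ).submatrix
          (fun a : {x // x ∈ I} => (a : Fin n)) (fun a : {x // x ∈ I} => (a : Fin n)))⁻¹
          ⟨i, hi⟩ ⟨j, hj⟩ = 0
        ↔ gsep G i j (Finset.univ \ I)))
    -- eigendecomposition `A = U D Uᵀ` of `A = (I + ε·Adj(G))⁻¹`
    (U D : Matrix (Fin n) (Fin n) ℝ)
    (hU : U ∈ Matrix.orthogonalGroup (Fin n) ℝ) (hD : D.IsDiag) (hDpos : ∀ k, 0 ≤ D k k)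
    (hdec : ((1 : Matrix (Fin n) (Fin n) ℝ) + ε • G.adjMatrix ℝ)⁻¹ = U * D * Uᵀ)
    -- the embedding map
    (f : Fin n → EuclideanSpace ℝ (Fin n))
    (hf : ∀ i k, f i k = U i k * Real.sqrt (D k k)) :
    -- `f` is an IPE map: partial orthogonality implies conditional independence
    (∀ (i j : Fin n) (S : Finset (Fin n)), i ≠ j → i ∉ S → j ∉ S →
      (inner ℝ (resid (f '' (S : Set (Fin n))) (f i)) (resid (f '' (S : Set (Fin n))) (f j)) : ℝ) = 0 →
      CIgiven μ X hX i j S)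
    -- and if `P` is faithful to `G`, then `f` is a faithful IPE map
    ∧ ((∀ (i j : Fin n) (S : Finset (Fin n)), i ≠ j → i ∉ S → j ∉ S →
        (gsep G i j S ↔ CIgiven μ X hX i j S)) →
      ∀ (i j : Fin n) (S : Finset (Fin n)), i ≠ j → i ∉ S → j ∉ S →
        ((inner ℝ (resid (f '' (S : Set (Fin n))) (f i))
          (resid (f '' (S : Set (Fin n))) (f j)) : ℝ) = 0 ↔ CIgiven μ X hX i j S)) :=
  ipe_construction_general (mΩ := mΩ) μ X hX G hImap ε hdet hperfect U D hD hDpos hdec f hf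
end
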